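/- arXiv:1404.5332 — 2 statements merged into one kernel-verified Lean document; each statement's English description precedes it below -/
import Mathlib

section
/- Let f be an even, real-valued, integrable function on [−π,π] for which there exist constants k₁, k₂ > 0 with k₁(2 − 2cos t) ≤ f(t) ≤ k₂(2 − 2cos t) for all t ∈ [−π,π] (i.e. f has a unique zero at 0 of order 2). Then there exist constants ĉ₁, ĉ₂ > 0 independent of n such that for every n ≥ 1 every eigenvalue λ of τ_n(f)^{−1} T_n(f) satisfies ĉ₁ ≤ λ ≤ ĉ₂. -/
open Real MeasureTheory Matrix

/-- The `l`-th Fourier (cosine) coefficient of an even function `f` on `[-π, π]`: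
`a_l = (1/π) ∫_0^π f(t) cos(l t) dt`. -/
noncomputable def fourierCoeffR (f : ℝ → ℝ) (l : ℤ) : ℝ :=
  (1 / π) * ∫ t in (0:ℝ)..π, f t * Real.cos ((l : ℝ) * t)

/-- The `n × n` symmetric Toeplitz matrix `T_n(f)` generated by `f`. -/
noncomputable def Tn (n : ℕ) (f : ℝ → ℝ) : Matrix (Fin n) (Fin n) ℝ :=
  Matrix.of fun j k => fourierCoeffR f (((j : ℕ) : ℤ) - ((k : ℕ) : ℤ))

/-- The `n × n` sine-transform matrix `(S_n)_{ij} = √(2/(n+1)) sin(i j π/(n+1))`. -/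
noncomputable def Sn (n : ℕ) : Matrix (Fin n) (Fin n) ℝ :=
  Matrix.of fun i j =>
    Real.sqrt (2 / (n + 1)) *
      Real.sin ((((i : ℕ) + 1) : ℝ) * (((j : ℕ) + 1) : ℝ) * π / (n + 1))

/-- The τ-matrix `τ_n(f) = S_n diag(f(kπ/(n+1))) S_n`. -/
noncomputable def taun (n : ℕ) (f : ℝ → ℝ) : Matrix (Fin n) (Fin n) ℝ :=
  Sn n * Matrix.diagonal (fun k : Fin n => f ((((k : ℕ) + 1) : ℝ) * π / (n + 1))) * Sn n

theorem test (n : ℕ) : (Tn n fun t => |t|) = (Tn n fun t => |t|) := rfl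


lemma even_neg_one_zpow {m : ℤ} (h : Even m) : ((-1:ℝ)) ^ m = 1 := by
  obtain ⟨k, rfl⟩ := h
  rw [← two_mul, _root_.zpow_mul]; norm_num

/-- telescoping cosine sum -/
lemma sum_cos_eq (N : ℕ) (hN : 0 < N) (m : ℤ) (hs : Real.sin ((m:ℝ) * π / (2*N)) ≠ 0) :
    ∑ j ∈ Finset.range N, Real.cos ((j:ℝ) * ((m:ℝ) * π / N)) = if Odd m then 1 else 0 := by
  set θ : ℝ := (m:ℝ) * π / N with hθ
  have h2 : (m:ℝ) * π / (2*N) = θ/2 := by rw [hθ]; ring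
  rw [h2] at hs
  have key : ∀ j : ℕ, Real.sin (((j:ℝ)+1) * θ - θ/2) - Real.sin ((j:ℝ)*θ - θ/2)
      = 2 * Real.sin (θ/2) * Real.cos ((j:ℝ)*θ) := by
    intro j
    rw [Real.sin_sub_sin]
    ring_nf
  have tel : ∑ j ∈ Finset.range N, (Real.sin (((j:ℝ)+1) * θ - θ/2) - Real.sin ((j:ℝ)*θ - θ/2))
      = Real.sin ((N:ℝ)*θ - θ/2) - Real.sin ((0:ℝ)*θ - θ/2) := by
    have := Finset.sum_range_sub (fun j : ℕ => Real.sin ((j:ℝ)*θ - θ/2)) N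
    simpa using this
  have hNθ : (N:ℝ) * θ = m * π := by
    rw [hθ]; field_simp
  have hend : Real.sin ((N:ℝ)*θ - θ/2) = -((-1:ℝ)^m * Real.sin (θ/2)) := by
    rw [hNθ, Real.sin_int_mul_pi_sub]
  have hsum : 2 * Real.sin (θ/2) * ∑ j ∈ Finset.range N, Real.cos ((j:ℝ)*θ)
      = (1 - (-1:ℝ)^m) * Real.sin (θ/2) := by
    rw [Finset.mul_sum]
    calc ∑ j ∈ Finset.range N, 2 * Real.sin (θ/2) * Real.cos ((j:ℝ)*θ)
        = ∑ j ∈ Finset.range N, (Real.sin (((j:ℝ)+1) * θ - θ/2) - Real.sin ((j:ℝ)*θ - θ/2)) := by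
          exact Finset.sum_congr rfl fun j _ => (key j).symm
      _ = Real.sin ((N:ℝ)*θ - θ/2) - Real.sin ((0:ℝ)*θ - θ/2) := tel
      _ = (1 - (-1:ℝ)^m) * Real.sin (θ/2) := by
          rw [hend]; rw [zero_mul, zero_sub, Real.sin_neg]; ring
  have h1 : ∑ j ∈ Finset.range N, Real.cos ((j:ℝ)*θ) = (1 - (-1:ℝ)^m)/2 := by
    have hfac : (2 * (∑ j ∈ Finset.range N, Real.cos ((j:ℝ)*θ)) - (1 - (-1:ℝ)^m)) * Real.sin (θ/2) = 0 := by
      linarith [hsum]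
    rcases mul_eq_zero.mp hfac with h | h
    · linarith
    · exact absurd h hs
  rw [h1]
  rcases Int.even_or_odd m with he | ho
  · rw [if_neg (Int.not_odd_iff_even.mpr he), even_neg_one_zpow he]; norm_num
  · rw [if_pos ho, Odd.neg_one_zpow ho]; norm_num

lemma sin_mul_sin (X Y : ℝ) :
    Real.sin X * Real.sin Y = (Real.cos (X - Y) - Real.cos (X + Y))/2 := by
  rw [Real.cos_sub, Real.cos_add]; ring

lemma sin_grid_ne_zero (N : ℕ) (hN : 0 < N) (m : ℤ) (hm0 : m ≠ 0) (hm : |m| < 2*N) :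
    Real.sin ((m:ℝ) * π / (2*N)) ≠ 0 := by
  intro h
  rw [Real.sin_eq_zero_iff] at h
  obtain ⟨k, hk⟩ := h
  have hNne : (N:ℝ) ≠ 0 := Nat.cast_ne_zero.mpr hN.ne'
  have : (k:ℝ) * (2*N) = m := by
    field_simp at hk
    nlinarith [Real.pi_pos, hk]
  have hkm : k * (2*(N:ℤ)) = m := by exact_mod_cast this
  rcases eq_or_ne k 0 with rfl | hk0
  · simp at hkm; omega
  · have : 2*(N:ℤ) ≤ |m| := by
      rw [← hkm, abs_mul]
      have : (1:ℤ) ≤ |k| := Int.one_le_abs hk0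
      have h2N : (0:ℤ) < 2*N := by positivity
      have habs : |2*(N:ℤ)| = 2*N := abs_of_pos h2N
      nlinarith []
    have : |m| < 2*(N:ℤ) := by exact_mod_cast hm
    omega

/-- sum over j=1..n of cos(j m π/(n+1)) -/
lemma base_cos_sum (n : ℕ) (m : ℤ) (hm0 : m ≠ 0) (hm : |m| < 2*(n+1)) :
    ∑ j : Fin n, Real.cos ((((j:ℕ)+1:ℕ):ℝ) * ((m:ℝ)*π/((n:ℝ)+1)))
      = (if Odd m then 1 else 0) - 1 := by
  have hN : 0 < n+1 := Nat.succ_pos n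
  have hs := sin_grid_ne_zero (n+1) hN m hm0 (by exact_mod_cast hm)
  have h := sum_cos_eq (n+1) hN m hs
  rw [Finset.sum_range_succ'] at h
  simp only [Nat.cast_zero, zero_mul, Real.cos_zero] at h
  rw [Fin.sum_univ_eq_sum_range (fun j => Real.cos ((((j:ℕ)+1:ℕ):ℝ) * ((m:ℝ)*π/((n:ℝ)+1))))]
  have : ∑ i ∈ Finset.range n, Real.cos ((((i:ℕ)+1:ℕ):ℝ) * ((m:ℝ)*π/((n:ℝ)+1)))
      = ∑ i ∈ Finset.range n, Real.cos (((i:ℕ)+1:ℝ) * ((m:ℝ)*π/((n:ℝ)+1:ℝ))) := by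
    apply Finset.sum_congr rfl; intro i _; push_cast; ring_nf
  rw [this]
  have h' : ∑ i ∈ Finset.range n, Real.cos (((i:ℕ)+1:ℝ) * ((m:ℝ)*π/((n:ℝ)+1:ℝ)))
      = (if Odd m then 1 else 0) - 1 := by
    have hcast : ((n+1:ℕ):ℝ) = (n:ℝ)+1 := by push_cast; ring
    rw [hcast] at h
    linarith [h]
  exact h'
section Orth
variable (n : ℕ)

lemma Sn_apply (i j : Fin n) : Sn n i j =
    Real.sqrt (2 / (n + 1)) *
      Real.sin ((((i : ℕ) + 1) : ℝ) * (((j : ℕ) + 1) : ℝ) * π / (n + 1)) := rfl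

lemma Sn_symm : (Sn n)ᵀ = Sn n := by
  ext i j
  simp only [Matrix.transpose_apply, Sn_apply]
  ring_nf

lemma Sn_mul_Sn : Sn n * Sn n = 1 := by
  ext a b
  rw [Matrix.mul_apply, Matrix.one_apply]
  have hNpos : (0:ℝ) < (n:ℝ)+1 := by positivity
  have hsq : Real.sqrt (2 / ((n:ℝ) + 1)) * Real.sqrt (2 / ((n:ℝ) + 1)) = 2/((n:ℝ)+1) :=
    Real.mul_self_sqrt (by positivity)
  set m₁ : ℤ := (a:ℤ) - (b:ℤ) with hm₁
  set m₂ : ℤ := (a:ℤ) + (b:ℤ) + 2 with hm₂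
  have hpt : ∀ j : Fin n, Sn n a j * Sn n j b
      = (2/((n:ℝ)+1)) * ((Real.cos ((((j:ℕ)+1:ℕ):ℝ) * ((m₁:ℝ)*π/((n:ℝ)+1)))
        - Real.cos ((((j:ℕ)+1:ℕ):ℝ) * ((m₂:ℝ)*π/((n:ℝ)+1))))/2) := by
    intro j
    rw [Sn_apply, Sn_apply]
    have hmm : Real.sqrt (2 / ((n:ℝ) + 1)) * Real.sin ((((a : ℕ) + 1) : ℝ) * (((j : ℕ) + 1) : ℝ) * π / ((n:ℝ) + 1)) *
        (Real.sqrt (2 / ((n:ℝ) + 1)) * Real.sin ((((j : ℕ) + 1) : ℝ) * (((b : ℕ) + 1) : ℝ) * π / ((n:ℝ) + 1)))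
        = (2/((n:ℝ)+1)) * (Real.sin ((((a : ℕ) + 1) : ℝ) * (((j : ℕ) + 1) : ℝ) * π / ((n:ℝ) + 1)) *
          Real.sin ((((j : ℕ) + 1) : ℝ) * (((b : ℕ) + 1) : ℝ) * π / ((n:ℝ) + 1))) := by
      rw [show Real.sqrt (2 / ((n:ℝ) + 1)) * Real.sin ((((a : ℕ) + 1) : ℝ) * (((j : ℕ) + 1) : ℝ) * π / ((n:ℝ) + 1)) *
        (Real.sqrt (2 / ((n:ℝ) + 1)) * Real.sin ((((j : ℕ) + 1) : ℝ) * (((b : ℕ) + 1) : ℝ) * π / ((n:ℝ) + 1)))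
        = (Real.sqrt (2 / ((n:ℝ) + 1)) * Real.sqrt (2 / ((n:ℝ) + 1))) * (Real.sin ((((a : ℕ) + 1) : ℝ) * (((j : ℕ) + 1) : ℝ) * π / ((n:ℝ) + 1)) *
          Real.sin ((((j : ℕ) + 1) : ℝ) * (((b : ℕ) + 1) : ℝ) * π / ((n:ℝ) + 1))) from by ring, hsq]
    have e₁ : (((a : ℕ) + 1) : ℝ) * (((j : ℕ) + 1) : ℝ) * π / ((n:ℝ) + 1)
        - (((j : ℕ) + 1) : ℝ) * (((b : ℕ) + 1) : ℝ) * π / ((n:ℝ) + 1)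
        = (((j:ℕ)+1:ℕ):ℝ) * ((m₁:ℝ)*π/((n:ℝ)+1)) := by
      push_cast [hm₁]; ring
    have e₂ : (((a : ℕ) + 1) : ℝ) * (((j : ℕ) + 1) : ℝ) * π / ((n:ℝ) + 1)
        + (((j : ℕ) + 1) : ℝ) * (((b : ℕ) + 1) : ℝ) * π / ((n:ℝ) + 1)
        = (((j:ℕ)+1:ℕ):ℝ) * ((m₂:ℝ)*π/((n:ℝ)+1)) := by
      push_cast [hm₂]; ring
    rw [hmm, sin_mul_sin, e₁, e₂]
  rw [Finset.sum_congr rfl (fun j _ => hpt j), ← Finset.mul_sum]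
  have hsplit : (∑ j : Fin n, ((Real.cos ((((j:ℕ)+1:ℕ):ℝ) * ((m₁:ℝ)*π/((n:ℝ)+1)))
        - Real.cos ((((j:ℕ)+1:ℕ):ℝ) * ((m₂:ℝ)*π/((n:ℝ)+1))))/2))
      = ((∑ j : Fin n, Real.cos ((((j:ℕ)+1:ℕ):ℝ) * ((m₁:ℝ)*π/((n:ℝ)+1))))
        - (∑ j : Fin n, Real.cos ((((j:ℕ)+1:ℕ):ℝ) * ((m₂:ℝ)*π/((n:ℝ)+1)))))/2 := by
    rw [← Finset.sum_div, Finset.sum_sub_distrib]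
  rw [hsplit]
  have hm₂sum : ∑ j : Fin n, Real.cos ((((j:ℕ)+1:ℕ):ℝ) * ((m₂:ℝ)*π/((n:ℝ)+1)))
      = (if Odd m₂ then 1 else 0) - 1 := by
    apply base_cos_sum
    · omega
    · have ha := a.isLt; have hb := b.isLt
      rw [abs_of_pos (by omega)]
      omega
  by_cases hab : a = b
  · subst hab
    have hm₁0 : m₁ = 0 := by omega
    have h₁ : ∑ j : Fin n, Real.cos ((((j:ℕ)+1:ℕ):ℝ) * ((m₁:ℝ)*π/((n:ℝ)+1))) = n := by
      rw [hm₁0]; simp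
    have hm₂even : ¬ Odd m₂ := Int.not_odd_iff_even.mpr ⟨(a:ℤ)+1, by omega⟩
    rw [if_pos rfl, h₁, hm₂sum, if_neg hm₂even]
    field_simp
    ring
  · have hm₁0 : m₁ ≠ 0 := by
      intro h; apply hab
      have : (a:ℤ) = (b:ℤ) := by omega
      exact Fin.ext (by exact_mod_cast this)
    have hm₁sum : ∑ j : Fin n, Real.cos ((((j:ℕ)+1:ℕ):ℝ) * ((m₁:ℝ)*π/((n:ℝ)+1)))
        = (if Odd m₁ then 1 else 0) - 1 := by
      apply base_cos_sum _ _ hm₁0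
      have ha := a.isLt; have hb := b.isLt
      rw [abs_lt]
      omega
    have hpar : Odd m₁ ↔ Odd m₂ := by
      constructor
      · rintro ⟨k, hk⟩; exact ⟨k + (b:ℤ) + 1, by omega⟩
      · rintro ⟨k, hk⟩; exact ⟨k - (b:ℤ) - 1, by omega⟩
    rw [if_neg hab, hm₁sum, hm₂sum]
    by_cases ho : Odd m₁
    · rw [if_pos ho, if_pos (hpar.mp ho)]; ring
    · rw [if_neg ho, if_neg (fun h => ho (hpar.mpr h))]; ring

end Orth
section Toeplitz

lemma integral_cos_int (m : ℤ) :
    ∫ t in (0:ℝ)..π, Real.cos ((m:ℝ)*t) = if m = 0 then π else 0 := by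
  by_cases h : m = 0
  · subst h; simp
  · rw [if_neg h]
    have hm : ((m:ℝ)) ≠ 0 := Int.cast_ne_zero.mpr h
    rw [intervalIntegral.integral_comp_mul_left Real.cos hm]
    rw [integral_cos]
    simp [Real.sin_int_mul_pi]

lemma fourierCoeffR_g (l : ℤ) :
    fourierCoeffR (fun t => 2 - 2*Real.cos t) l
      = if l = 0 then 2 else if l = 1 ∨ l = -1 then -1 else 0 := by
  have hpt : ∀ t : ℝ, (2 - 2*Real.cos t) * Real.cos ((l:ℝ)*t)
      = 2*Real.cos ((l:ℝ)*t) - Real.cos (((l+1:ℤ):ℝ)*t) - Real.cos (((l-1:ℤ):ℝ)*t) := by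
    intro t
    push_cast
    rw [show ((l:ℝ)+1)*t = (l:ℝ)*t + t from by ring,
        show ((l:ℝ)-1)*t = (l:ℝ)*t - t from by ring,
        Real.cos_add, Real.cos_sub]
    ring
  have hI : ∀ m : ℤ, IntervalIntegrable (fun t => Real.cos ((m:ℝ)*t)) MeasureTheory.volume 0 π :=
    fun m => ((Real.continuous_cos.comp (continuous_const.mul continuous_id))).intervalIntegrable 0 π
  unfold fourierCoeffR
  rw [intervalIntegral.integral_congr (g := fun t =>
      2*Real.cos ((l:ℝ)*t) - Real.cos (((l+1:ℤ):ℝ)*t) - Real.cos (((l-1:ℤ):ℝ)*t))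
      (fun t _ => hpt t)]
  rw [intervalIntegral.integral_sub (((hI l).const_mul 2).sub (hI (l+1))) (hI (l-1)),
      intervalIntegral.integral_sub ((hI l).const_mul 2) (hI (l+1)),
      intervalIntegral.integral_const_mul, integral_cos_int, integral_cos_int, integral_cos_int]
  have hπ : π ≠ 0 := Real.pi_ne_zero
  by_cases h0 : l = 0
  · subst h0; norm_num; field_simp
  · rw [if_neg h0]
    by_cases h1 : l = 1
    · subst h1; norm_num
    · by_cases h2 : l = -1
      · subst h2; norm_num
      · rw [if_neg h0, if_neg (by omega), if_neg (by omega), if_neg (by tauto)]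
        ring

lemma Tn_g_mul_Sn (n : ℕ) :
    Tn n (fun t => 2 - 2*Real.cos t) * Sn n
      = Sn n * Matrix.diagonal (fun k : Fin n => 2 - 2*Real.cos ((((k:ℕ)+1):ℝ)*π/(n+1))) := by
  ext j k
  rw [Matrix.mul_apply, Matrix.mul_diagonal]
  set θ : ℝ := (((k:ℕ)+1):ℝ)*π/((n:ℝ)+1) with hθ
  set c : ℝ := Real.sqrt (2/((n:ℝ)+1)) with hc
  set φ : ℕ → ℝ := fun i => c * Real.sin ((i:ℝ) * θ) with hφ
  have hS : ∀ m : Fin n, Sn n m k = φ ((m:ℕ)+1) := by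
    intro m
    rw [Sn_apply, hφ]
    simp only []
    congr 1
    push_cast [hθ]
    ring
  have hφ0 : φ 0 = 0 := by simp [hφ]
  have hφN : φ (n+1) = 0 := by
    have : (((n+1:ℕ)):ℝ) * θ = (((k:ℕ)+1:ℕ):ℝ) * π := by
      rw [hθ]; push_cast; field_simp
    simp only [hφ, this]
    rw [Real.sin_nat_mul_pi]
    ring
  have hrec : ∀ J : ℕ, 2*φ (J+1) - φ J - φ (J+2) = (2 - 2*Real.cos θ) * φ (J+1) := by
    intro J
    simp only [hφ]
    rw [show ((J:ℕ):ℝ)*θ = (((J+1:ℕ)):ℝ)*θ - θ from by push_cast; ring,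
        show (((J+2:ℕ)):ℝ)*θ = (((J+1:ℕ)):ℝ)*θ + θ from by push_cast; ring,
        Real.sin_sub, Real.sin_add]
    ring
  have hpt : ∀ m : Fin n, Tn n (fun t => 2 - 2*Real.cos t) j m * Sn n m k
      = (if m = j then 2*φ ((j:ℕ)+1) else 0)
        - (if (m:ℕ)+1 = (j:ℕ) then φ (j:ℕ) else 0)
        - (if (m:ℕ) = (j:ℕ)+1 then φ ((j:ℕ)+2) else 0) := by
    intro m
    rw [hS m]
    have hT : Tn n (fun t => 2 - 2*Real.cos t) j m
        = if ((j:ℕ):ℤ) - ((m:ℕ):ℤ) = 0 then 2 else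
            if ((j:ℕ):ℤ) - ((m:ℕ):ℤ) = 1 ∨ ((j:ℕ):ℤ) - ((m:ℕ):ℤ) = -1 then -1 else 0 :=
      fourierCoeffR_g _
    by_cases h1 : m = j
    · subst h1
      rw [hT, if_pos (by omega), if_pos rfl, if_neg (by omega), if_neg (by omega)]
      ring
    · have hne : ((j:ℕ):ℤ) - ((m:ℕ):ℤ) ≠ 0 := by
        intro h; exact h1 (Fin.ext (by omega))
      by_cases h2 : (m:ℕ)+1 = (j:ℕ)
      · rw [hT, if_neg hne, if_pos (Or.inl (by omega)), if_neg h1, if_pos h2,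
            if_neg (by omega), h2]
        ring
      · by_cases h3 : (m:ℕ) = (j:ℕ)+1
        · rw [hT, if_neg hne, if_pos (Or.inr (by omega)), if_neg h1, if_neg h2, if_pos h3, h3]
          ring
        · rw [hT, if_neg hne, if_neg (by omega), if_neg h1, if_neg h2, if_neg h3]
          ring
  rw [Finset.sum_congr rfl (fun m _ => hpt m), Finset.sum_sub_distrib, Finset.sum_sub_distrib]
  have s1 : (∑ m : Fin n, if m = j then 2*φ ((j:ℕ)+1) else 0) = 2*φ ((j:ℕ)+1) := by
    rw [Finset.sum_ite_eq' Finset.univ j (fun _ => 2*φ ((j:ℕ)+1)), if_pos (Finset.mem_univ j)]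
  have s2 : (∑ m : Fin n, if (m:ℕ)+1 = (j:ℕ) then φ (j:ℕ) else 0) = φ (j:ℕ) := by
    by_cases hj0 : (j:ℕ) = 0
    · rw [Finset.sum_eq_zero (fun m _ => if_neg (by omega))]
      rw [hj0, hφ0]
    · have hlt : (j:ℕ)-1 < n := by have := j.isLt; omega
      rw [Finset.sum_eq_single_of_mem (⟨(j:ℕ)-1, hlt⟩ : Fin n) (Finset.mem_univ _)
        (fun b _ hb => if_neg (fun h => hb (Fin.ext (by simp; omega))))]
      rw [if_pos (by simp; omega)]
  have s3 : (∑ m : Fin n, if (m:ℕ) = (j:ℕ)+1 then φ ((j:ℕ)+2) else 0) = φ ((j:ℕ)+2) := by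
    by_cases hjn : (j:ℕ)+1 < n
    · rw [Finset.sum_eq_single_of_mem (⟨(j:ℕ)+1, hjn⟩ : Fin n) (Finset.mem_univ _)
        (fun b _ hb => if_neg (fun h => hb (Fin.ext (by simp; omega))))]
      rw [if_pos (by simp)]
    · have hj : (j:ℕ)+2 = n+1 := by have := j.isLt; omega
      rw [Finset.sum_eq_zero (fun m _ => if_neg (by have := m.isLt; omega))]
      rw [hj, hφN]
  rw [s1, s2, s3, hS j, hrec (j:ℕ)]
  ring

lemma Tn_g_eq (n : ℕ) :
    Tn n (fun t => 2 - 2*Real.cos t) = taun n (fun t => 2 - 2*Real.cos t) := by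
  have h1 : Tn n (fun t => 2 - 2*Real.cos t)
      = Tn n (fun t => 2 - 2*Real.cos t) * (Sn n * Sn n) := by
    rw [Sn_mul_Sn, mul_one]
  rw [h1, ← mul_assoc, Tn_g_mul_Sn]
  rfl

end Toeplitz
section Quad

lemma Tn_quadform_nonneg (n : ℕ) (h : ℝ → ℝ)
    (hI : IntervalIntegrable h MeasureTheory.volume 0 π)
    (hpos : ∀ t ∈ Set.Icc (0:ℝ) π, 0 ≤ h t)
    (v : Fin n → ℝ) : 0 ≤ v ⬝ᵥ (Tn n h).mulVec v := by
  have hIl : ∀ l : ℤ, IntervalIntegrable (fun t => h t * Real.cos ((l:ℝ)*t))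
      MeasureTheory.volume 0 π := fun l =>
    hI.mul_continuousOn ((Real.continuous_cos.comp (continuous_const.mul continuous_id)).continuousOn)
  have expand : v ⬝ᵥ (Tn n h).mulVec v
      = ∑ p : Fin n × Fin n, (v p.1 * v p.2) *
          fourierCoeffR h (((p.1:ℕ):ℤ) - ((p.2:ℕ):ℤ)) := by
    rw [Fintype.sum_prod_type]
    simp only [dotProduct, Matrix.mulVec, Tn, Matrix.of_apply, Finset.mul_sum]
    exact Finset.sum_congr rfl (fun j _ => Finset.sum_congr rfl (fun k _ => by ring))
  have step2 : ∀ p : Fin n × Fin n, (v p.1 * v p.2) * fourierCoeffR h (((p.1:ℕ):ℤ) - ((p.2:ℕ):ℤ))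
      = (1/π) * ∫ t in (0:ℝ)..π, (v p.1 * v p.2) *
          (h t * Real.cos ((((((p.1:ℕ):ℤ) - ((p.2:ℕ):ℤ)):ℤ):ℝ) * t)) := by
    intro p
    simp only [fourierCoeffR]
    rw [intervalIntegral.integral_const_mul]
    ring
  have pointwise : ∀ t : ℝ, (∑ p : Fin n × Fin n, (v p.1 * v p.2) *
        (h t * Real.cos ((((((p.1:ℕ):ℤ) - ((p.2:ℕ):ℤ)):ℤ):ℝ) * t)))
      = h t * ((∑ j : Fin n, v j * Real.cos (((j:ℕ):ℝ) * t))^2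
             + (∑ j : Fin n, v j * Real.sin (((j:ℕ):ℝ) * t))^2) := by
    intro t
    rw [Fintype.sum_prod_type]
    have hterm : ∀ j k : Fin n, (v j * v k) *
          (h t * Real.cos ((((((j:ℕ):ℤ) - ((k:ℕ):ℤ)):ℤ):ℝ) * t))
        = h t * ((v j * Real.cos (((j:ℕ):ℝ)*t)) * (v k * Real.cos (((k:ℕ):ℝ)*t))
               + (v j * Real.sin (((j:ℕ):ℝ)*t)) * (v k * Real.sin (((k:ℕ):ℝ)*t))) := by
      intro j k
      rw [show ((((((j:ℕ):ℤ) - ((k:ℕ):ℤ)):ℤ):ℝ) * t) = ((j:ℕ):ℝ)*t - ((k:ℕ):ℝ)*t from by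
        push_cast; ring, Real.cos_sub]
      ring
    rw [Finset.sum_congr rfl (fun j _ => Finset.sum_congr rfl (fun k _ => hterm j k))]
    rw [pow_two, pow_two, Finset.sum_mul_sum, Finset.sum_mul_sum]
    rw [mul_add, Finset.mul_sum, Finset.mul_sum, ← Finset.sum_add_distrib]
    apply Finset.sum_congr rfl
    intro j _
    rw [Finset.mul_sum, Finset.mul_sum, ← Finset.sum_add_distrib]
    exact Finset.sum_congr rfl (fun k _ => by ring)
  have key : v ⬝ᵥ (Tn n h).mulVec v
      = (1/π) * ∫ t in (0:ℝ)..π,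
          h t * ((∑ j : Fin n, v j * Real.cos (((j:ℕ):ℝ) * t))^2
               + (∑ j : Fin n, v j * Real.sin (((j:ℕ):ℝ) * t))^2) := by
    rw [expand, Finset.sum_congr rfl (fun p _ => step2 p), ← Finset.mul_sum]
    congr 1
    rw [← intervalIntegral.integral_finset_sum]
    · exact intervalIntegral.integral_congr (fun t _ => pointwise t)
    · exact fun p _ => ((hIl _).const_mul _)
  rw [key]
  apply mul_nonneg (by positivity)
  apply intervalIntegral.integral_nonneg Real.pi_pos.le
  intro t ht
  exact mul_nonneg (hpos t ht) (by positivity)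

lemma fourierCoeffR_sub_smul (f : ℝ → ℝ) (c : ℝ) (l : ℤ)
    (hIf : IntervalIntegrable f MeasureTheory.volume 0 π) :
    fourierCoeffR (fun t => f t - c * (2 - 2*Real.cos t)) l
      = fourierCoeffR f l - c * fourierCoeffR (fun t => 2 - 2*Real.cos t) l := by
  have hcos : Continuous fun t : ℝ => Real.cos ((l:ℝ)*t) :=
    Real.continuous_cos.comp (continuous_const.mul continuous_id)
  have h1 : IntervalIntegrable (fun t => f t * Real.cos ((l:ℝ)*t))
      MeasureTheory.volume 0 π := hIf.mul_continuousOn hcos.continuousOn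
  have h2 : IntervalIntegrable (fun t => c * ((2 - 2*Real.cos t) * Real.cos ((l:ℝ)*t)))
      MeasureTheory.volume 0 π :=
    (continuous_const.mul ((continuous_const.sub (continuous_const.mul Real.continuous_cos)).mul
      hcos)).intervalIntegrable 0 π
  simp only [fourierCoeffR]
  rw [intervalIntegral.integral_congr
      (g := fun t => f t * Real.cos ((l:ℝ)*t) - c * ((2 - 2*Real.cos t) * Real.cos ((l:ℝ)*t)))
      (fun t _ => by ring)]
  rw [intervalIntegral.integral_sub h1 h2, intervalIntegral.integral_const_mul]
  ring

lemma Tn_sub_smul (n : ℕ) (f : ℝ → ℝ) (c : ℝ)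
    (hIf : IntervalIntegrable f MeasureTheory.volume 0 π) :
    Tn n (fun t => f t - c * (2 - 2*Real.cos t))
      = Tn n f - c • Tn n (fun t => 2 - 2*Real.cos t) := by
  ext j k
  simp only [Tn, Matrix.of_apply, Matrix.sub_apply, Matrix.smul_apply, smul_eq_mul]
  exact fourierCoeffR_sub_smul f c _ hIf

end Quad
section MainAux

lemma fourierCoeffR_smul_sub (f : ℝ → ℝ) (c : ℝ) (l : ℤ)
    (hIf : IntervalIntegrable f MeasureTheory.volume 0 π) :
    fourierCoeffR (fun t => c * (2 - 2*Real.cos t) - f t) l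
      = c * fourierCoeffR (fun t => 2 - 2*Real.cos t) l - fourierCoeffR f l := by
  have hcos : Continuous fun t : ℝ => Real.cos ((l:ℝ)*t) :=
    Real.continuous_cos.comp (continuous_const.mul continuous_id)
  have h1 : IntervalIntegrable (fun t => f t * Real.cos ((l:ℝ)*t))
      MeasureTheory.volume 0 π := hIf.mul_continuousOn hcos.continuousOn
  have h2 : IntervalIntegrable (fun t => c * ((2 - 2*Real.cos t) * Real.cos ((l:ℝ)*t)))
      MeasureTheory.volume 0 π :=
    (continuous_const.mul ((continuous_const.sub (continuous_const.mul Real.continuous_cos)).mul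
      hcos)).intervalIntegrable 0 π
  simp only [fourierCoeffR]
  rw [intervalIntegral.integral_congr
      (g := fun t => c * ((2 - 2*Real.cos t) * Real.cos ((l:ℝ)*t)) - f t * Real.cos ((l:ℝ)*t))
      (fun t _ => by ring)]
  rw [intervalIntegral.integral_sub h2 h1, intervalIntegral.integral_const_mul]
  ring

lemma Tn_smul_sub (n : ℕ) (f : ℝ → ℝ) (c : ℝ)
    (hIf : IntervalIntegrable f MeasureTheory.volume 0 π) :
    Tn n (fun t => c * (2 - 2*Real.cos t) - f t)
      = c • Tn n (fun t => 2 - 2*Real.cos t) - Tn n f := by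
  ext j k
  simp only [Tn, Matrix.of_apply, Matrix.sub_apply, Matrix.smul_apply, smul_eq_mul]
  exact fourierCoeffR_smul_sub f c _ hIf

lemma taun_quadform (n : ℕ) (h : ℝ → ℝ) (v : Fin n → ℝ) :
    v ⬝ᵥ (taun n h).mulVec v
      = ∑ k : Fin n, h ((((k:ℕ)+1):ℝ)*π/(n+1)) * (((Sn n).mulVec v) k)^2 := by
  unfold taun
  rw [← Matrix.mulVec_mulVec, ← Matrix.mulVec_mulVec]
  rw [Matrix.dotProduct_mulVec]
  rw [show (Matrix.vecMul v (Sn n)) = (Sn n).mulVec v from by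
    conv_lhs => rw [← Sn_symm n]
    rw [Matrix.vecMul_transpose]]
  rw [dotProduct]
  exact Finset.sum_congr rfl (fun k _ => by rw [Matrix.mulVec_diagonal]; ring)

lemma theta_pos (n : ℕ) (k : Fin n) : 0 < (((k:ℕ)+1):ℝ)*π/((n:ℝ)+1) := by
  have := Real.pi_pos
  positivity

lemma theta_le (n : ℕ) (k : Fin n) : (((k:ℕ)+1):ℝ)*π/((n:ℝ)+1) ≤ π := by
  rw [div_le_iff₀ (by positivity)]
  have hk : ((k:ℕ):ℝ)+1 ≤ (n:ℝ) := by
    have := k.isLt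
    exact_mod_cast Nat.succ_le_of_lt this
  nlinarith [Real.pi_pos]

lemma g_theta_pos (n : ℕ) (k : Fin n) :
    0 < 2 - 2*Real.cos ((((k:ℕ)+1):ℝ)*π/((n:ℝ)+1)) := by
  have h1 : Real.cos ((((k:ℕ)+1):ℝ)*π/((n:ℝ)+1)) < Real.cos 0 :=
    Real.cos_lt_cos_of_nonneg_of_le_pi le_rfl (theta_le n k) (theta_pos n k)
  rw [Real.cos_zero] at h1
  linarith

end MainAux
/-- **Spectral equivalence for a zero of order 2.**
If `f` is even and integrable on `[-π, π]` and `k₁(2 - 2cos t) ≤ f(t) ≤ k₂(2 - 2cos t)`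
for some `k₁, k₂ > 0`, then there exist constants `ĉ₁, ĉ₂ > 0` independent of `n` such
that every eigenvalue `lam` of `τ_n(f)⁻¹ T_n(f)` satisfies `ĉ₁ ≤ lam ≤ ĉ₂`. -/
theorem spectral_equivalence_order_two
    (f : ℝ → ℝ)
    (hf_even : ∀ t, f (-t) = f t)
    (hf_int : IntervalIntegrable f MeasureTheory.volume (-π) π)
    (k₁ k₂ : ℝ) (hk₁ : 0 < k₁) (hk₂ : 0 < k₂)
    (hf_low : ∀ t ∈ Set.Icc (-π) π, k₁ * (2 - 2 * Real.cos t) ≤ f t)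
    (hf_up : ∀ t ∈ Set.Icc (-π) π, f t ≤ k₂ * (2 - 2 * Real.cos t)) :
    ∃ c₁ c₂ : ℝ, 0 < c₁ ∧ 0 < c₂ ∧
      ∀ n : ℕ, 1 ≤ n →
        ∀ lam ∈ spectrum ℝ ((taun n f)⁻¹ * Tn n f), c₁ ≤ lam ∧ lam ≤ c₂ := by
  have hπ := Real.pi_pos
  -- integrability of f on [0, π]
  have hf0π : IntervalIntegrable f MeasureTheory.volume 0 π := by
    apply hf_int.mono_set
    rw [Set.uIcc_of_le (by linarith : (0:ℝ) ≤ π), Set.uIcc_of_le (by linarith : -π ≤ π)]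
    exact Set.Icc_subset_Icc (by linarith) le_rfl
  refine ⟨k₁/k₂, k₂/k₁, by positivity, by positivity, ?_⟩
  intro n hn lam hlam
  set θ : Fin n → ℝ := fun k => (((k:ℕ)+1):ℝ)*π/((n:ℝ)+1) with hθdef
  have hθmem : ∀ k : Fin n, θ k ∈ Set.Icc (-π) π :=
    fun k => ⟨by linarith [theta_pos n k], theta_le n k⟩
  have hfθ_low : ∀ k : Fin n, k₁ * (2 - 2*Real.cos (θ k)) ≤ f (θ k) :=
    fun k => hf_low _ (hθmem k)
  have hfθ_up : ∀ k : Fin n, f (θ k) ≤ k₂ * (2 - 2*Real.cos (θ k)) :=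
    fun k => hf_up _ (hθmem k)
  have hfθ_pos : ∀ k : Fin n, 0 < f (θ k) := fun k =>
    lt_of_lt_of_le (by have := g_theta_pos n k; positivity) (hfθ_low k)
  -- invertibility of A := taun n f
  set A := taun n f with hA
  set T := Tn n f with hT
  have hdetSn : Matrix.det (Sn n) * Matrix.det (Sn n) = 1 := by
    have := congrArg Matrix.det (Sn_mul_Sn n)
    rwa [Matrix.det_mul, Matrix.det_one] at this
  have hdetA : A.det ≠ 0 := by
    rw [hA]
    unfold taun
    rw [Matrix.det_mul, Matrix.det_mul, Matrix.det_diagonal]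
    have hprod : 0 < ∏ k : Fin n, f ((((k:ℕ)+1):ℝ)*π/((n:ℝ)+1)) :=
      Finset.prod_pos (fun k _ => hfθ_pos k)
    intro h
    rcases mul_eq_zero.mp h with h' | h'
    · rcases mul_eq_zero.mp h' with h'' | h''
      · rw [h''] at hdetSn; simp at hdetSn
      · exact hprod.ne' h''
    · rw [h'] at hdetSn; simp at hdetSn
  have hAu : IsUnit A.det := isUnit_iff_ne_zero.mpr hdetA
  -- extract eigenvector
  rw [spectrum.mem_iff] at hlam
  have hdet0 : (lam • (1 : Matrix (Fin n) (Fin n) ℝ) - A⁻¹ * T).det = 0 := by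
    by_contra hne
    exact hlam (by
      rw [Algebra.algebraMap_eq_smul_one]
      exact (Matrix.isUnit_iff_isUnit_det _).mpr (isUnit_iff_ne_zero.mpr hne))
  have hdet1 : (lam • A - T).det = 0 := by
    have heq : lam • A - T = A * (lam • (1 : Matrix (Fin n) (Fin n) ℝ) - A⁻¹ * T) := by
      rw [Matrix.mul_sub, Matrix.mul_smul, mul_one, ← Matrix.mul_assoc,
          Matrix.mul_nonsing_inv _ hAu, one_mul]
    rw [heq, Matrix.det_mul, hdet0, mul_zero]
  obtain ⟨v, hv0, hv⟩ := Matrix.exists_mulVec_eq_zero_iff.mpr hdet1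
  have hvTA : T.mulVec v = lam • (A.mulVec v) := by
    rw [Matrix.sub_mulVec, Matrix.smul_mulVec] at hv
    have := sub_eq_zero.mp hv
    exact this.symm
  have heig : lam * (v ⬝ᵥ A.mulVec v) = v ⬝ᵥ T.mulVec v := by
    rw [hvTA, dotProduct_smul, smul_eq_mul]
  -- quadratic forms
  set w : Fin n → ℝ := (Sn n).mulVec v with hw
  have hw0 : w ≠ 0 := by
    intro h
    apply hv0
    have hv' : (Sn n).mulVec w = v := by
      rw [hw, Matrix.mulVec_mulVec, Sn_mul_Sn, Matrix.one_mulVec]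
    rw [h, Matrix.mulVec_zero] at hv'
    exact hv'.symm
  obtain ⟨k₀, hk₀⟩ : ∃ k, w k ≠ 0 := Function.ne_iff.mp hw0
  set q : ℝ := v ⬝ᵥ (Tn n (fun t => 2 - 2*Real.cos t)).mulVec v with hq
  have hq_eq : q = ∑ k : Fin n, (2 - 2*Real.cos (θ k)) * (w k)^2 := by
    rw [hq, Tn_g_eq, taun_quadform]
  have hq_pos : 0 < q := by
    rw [hq_eq]
    apply Finset.sum_pos' (fun k _ => by
      have := g_theta_pos n k; positivity)
    exact ⟨k₀, Finset.mem_univ k₀, by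
      have h1 := g_theta_pos n k₀
      have h2 : 0 < (w k₀)^2 := by positivity
      exact mul_pos h1 h2⟩
  have hAq : v ⬝ᵥ A.mulVec v = ∑ k : Fin n, f (θ k) * (w k)^2 := by
    rw [hA, taun_quadform]
  have hA_low : k₁ * q ≤ v ⬝ᵥ A.mulVec v := by
    rw [hAq, hq_eq, Finset.mul_sum]
    apply Finset.sum_le_sum
    intro k _
    have := hfθ_low k
    nlinarith [sq_nonneg (w k)]
  have hA_up : v ⬝ᵥ A.mulVec v ≤ k₂ * q := by
    rw [hAq, hq_eq, Finset.mul_sum]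
    apply Finset.sum_le_sum
    intro k _
    have := hfθ_up k
    nlinarith [sq_nonneg (w k)]
  -- Toeplitz quadratic form bounds
  have hT_low : k₁ * q ≤ v ⬝ᵥ T.mulVec v := by
    have h0 := Tn_quadform_nonneg n (fun t => f t - k₁ * (2 - 2*Real.cos t))
      (hf0π.sub ((continuous_const.mul (continuous_const.sub
        (continuous_const.mul Real.continuous_cos))).intervalIntegrable 0 π))
      (fun t ht => by
        have := hf_low t ⟨by linarith [ht.1], ht.2⟩
        show (0:ℝ) ≤ f t - k₁ * (2 - 2*Real.cos t)
        linarith) v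
    rw [Tn_sub_smul n f k₁ hf0π, Matrix.sub_mulVec, dotProduct_sub,
        Matrix.smul_mulVec, dotProduct_smul, smul_eq_mul] at h0
    rw [← hq] at h0
    linarith
  have hT_up : v ⬝ᵥ T.mulVec v ≤ k₂ * q := by
    have h0 := Tn_quadform_nonneg n (fun t => k₂ * (2 - 2*Real.cos t) - f t)
      (((continuous_const.mul (continuous_const.sub
        (continuous_const.mul Real.continuous_cos))).intervalIntegrable 0 π).sub hf0π)
      (fun t ht => by
        have := hf_up t ⟨by linarith [ht.1], ht.2⟩
        show (0:ℝ) ≤ k₂ * (2 - 2*Real.cos t) - f t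
        linarith) v
    rw [Tn_smul_sub n f k₂ hf0π, Matrix.sub_mulVec, dotProduct_sub,
        Matrix.smul_mulVec, dotProduct_smul, smul_eq_mul] at h0
    rw [← hq] at h0
    linarith
  -- conclude
  have ha_pos : 0 < v ⬝ᵥ A.mulVec v := lt_of_lt_of_le (by positivity) hA_low
  have htq_pos : 0 < v ⬝ᵥ T.mulVec v := lt_of_lt_of_le (by positivity) hT_low
  have hlam_pos : 0 < lam := by
    by_contra hneg
    push_neg at hneg
    nlinarith
  constructor
  · rw [div_le_iff₀ hk₂]
    nlinarith
  · rw [le_div_iff₀ hk₁]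
    nlinarith
end

section
/- Let k ≥ 1 be an integer, r ∈ [0,2), and θ = 2k + r. Let g(t) = (2 − 2cos t)^k |t|^r, and let r* = min_{t ∈ [−π,π], t ≠ 0} |t|^{2k}/(2 − 2cos t)^k > 0 and R* = max_{t ∈ [−π,π], t ≠ 0} |t|^{2k}/(2 − 2cos t)^k < ∞ (the ratio extends continuously to t = 0 with value 1). Then for every n ≥ 1 both T_n(g) and T_n(|t|^θ) are positive definite and every eigenvalue of T_n(g)^{−1} T_n(|t|^θ) lies in the open interval (r*, R*); in particular the sequences {T_n(g)} and {T_n(|t|^θ)} are spectrally equivalent. -/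
open Real MeasureTheory Matrix

/-! ### Auxiliary definitions and lemmas -/

/-- The nonnegative trigonometric "power" of a vector. -/
noncomputable def ptrig (n : ℕ) (x : Fin n → ℝ) (t : ℝ) : ℝ :=
  (∑ j, x j * Real.cos ((j : ℕ) * t))^2 + (∑ j, x j * Real.sin ((j : ℕ) * t))^2

lemma ptrig_nonneg (n : ℕ) (x : Fin n → ℝ) (t : ℝ) : 0 ≤ ptrig n x t := by
  unfold ptrig; positivity

lemma ptrig_continuous (n : ℕ) (x : Fin n → ℝ) : Continuous (ptrig n x) := by
  unfold ptrig; fun_prop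

lemma tn_quadform (n : ℕ) (f : ℝ → ℝ) (hf : ContinuousOn f (Set.Icc 0 π)) (x : Fin n → ℝ) :
    x ⬝ᵥ (Tn n f) *ᵥ x = (1/π) * ∫ t in (0:ℝ)..π, f t * ptrig n x t := by
  have huIcc : Set.uIcc (0:ℝ) π = Set.Icc 0 π := Set.uIcc_of_le pi_pos.le
  have hint : ∀ (j k : Fin n), IntervalIntegrable
      (fun t => f t * ((x j * Real.cos ((j:ℕ) * t)) * (x k * Real.cos ((k:ℕ) * t)) +
        (x j * Real.sin ((j:ℕ) * t)) * (x k * Real.sin ((k:ℕ) * t)))) volume 0 π := by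
    intro j k
    apply ContinuousOn.intervalIntegrable
    rw [huIcc]
    exact hf.mul (Continuous.continuousOn (by fun_prop))
  calc x ⬝ᵥ (Tn n f) *ᵥ x
      = ∑ j, ∑ k, (1/π) * ∫ t in (0:ℝ)..π,
          f t * ((x j * Real.cos ((j:ℕ) * t)) * (x k * Real.cos ((k:ℕ) * t)) +
            (x j * Real.sin ((j:ℕ) * t)) * (x k * Real.sin ((k:ℕ) * t))) := by
        simp only [dotProduct, mulVec, Tn, fourierCoeffR, Matrix.of_apply]
        refine Finset.sum_congr rfl fun j _ => ?_
        rw [Finset.mul_sum]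
        refine Finset.sum_congr rfl fun k _ => ?_
        rw [show x j * ((1/π * ∫ t in (0:ℝ)..π, f t * Real.cos (((((j:ℕ):ℤ) - ((k:ℕ):ℤ) : ℤ) : ℝ) * t)) * x k)
            = 1/π * ((x j * x k) * ∫ t in (0:ℝ)..π, f t * Real.cos (((((j:ℕ):ℤ) - ((k:ℕ):ℤ) : ℤ) : ℝ) * t)) by ring,
          ← intervalIntegral.integral_const_mul]
        congr 1
        refine intervalIntegral.integral_congr fun t _ => ?_
        push_cast
        rw [sub_mul, Real.cos_sub]
        ring
    _ = (1/π) * ∑ j, ∑ k, ∫ t in (0:ℝ)..π,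
          f t * ((x j * Real.cos ((j:ℕ) * t)) * (x k * Real.cos ((k:ℕ) * t)) +
            (x j * Real.sin ((j:ℕ) * t)) * (x k * Real.sin ((k:ℕ) * t))) := by
        rw [Finset.mul_sum]; exact Finset.sum_congr rfl fun j _ => (Finset.mul_sum _ _ _).symm
    _ = (1/π) * ∫ t in (0:ℝ)..π, ∑ j, ∑ k,
          f t * ((x j * Real.cos ((j:ℕ) * t)) * (x k * Real.cos ((k:ℕ) * t)) +
            (x j * Real.sin ((j:ℕ) * t)) * (x k * Real.sin ((k:ℕ) * t))) := by
        congr 1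
        have hint2 : ∀ j : Fin n, IntervalIntegrable
            (fun t => ∑ k, f t * ((x j * Real.cos ((j:ℕ) * t)) * (x k * Real.cos ((k:ℕ) * t)) +
              (x j * Real.sin ((j:ℕ) * t)) * (x k * Real.sin ((k:ℕ) * t)))) volume 0 π := by
          intro j
          apply ContinuousOn.intervalIntegrable
          rw [huIcc]
          exact continuousOn_finset_sum _ fun k _ =>
            hf.mul (Continuous.continuousOn (by fun_prop))
        rw [intervalIntegral.integral_finset_sum (fun j _ => hint2 j)]
        exact Finset.sum_congr rfl fun j _ =>
          (intervalIntegral.integral_finset_sum (fun k _ => hint j k)).symm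
    _ = (1/π) * ∫ t in (0:ℝ)..π, f t * ptrig n x t := by
        congr 1
        refine intervalIntegral.integral_congr fun t _ => ?_
        simp only [← Finset.mul_sum]
        congr 1
        unfold ptrig
        rw [sq, sq, Finset.sum_mul_sum, Finset.sum_mul_sum, ← Finset.sum_add_distrib]
        exact Finset.sum_congr rfl fun j _ => Finset.sum_add_distrib

lemma exists_ptrig_pos {n : ℕ} {x : Fin n → ℝ} (hx : x ≠ 0) :
    ∃ t0 ∈ Set.Ioo 0 π, 0 < ptrig n x t0 := by
  by_contra hcon
  push_neg at hcon
  have hzero : ∀ t ∈ Set.Ioo (0:ℝ) π,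
      (∑ j, x j * Real.cos ((j : ℕ) * t)) = 0 ∧ (∑ j, x j * Real.sin ((j : ℕ) * t)) = 0 := by
    intro t ht
    have h1 := hcon t ht
    unfold ptrig at h1
    constructor <;> nlinarith [sq_nonneg (∑ j, x j * Real.cos ((j : ℕ) * t)),
      sq_nonneg (∑ j, x j * Real.sin ((j : ℕ) * t))]
  set p : Polynomial ℂ := ∑ j : Fin n, Polynomial.C (x j : ℂ) * Polynomial.X ^ (j : ℕ) with hp
  have hroot : ∀ t ∈ Set.Ioo (0:ℝ) π, p.IsRoot (Complex.exp (t * Complex.I)) := by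
    intro t ht
    have h2 := hzero t ht
    have heval : p.eval (Complex.exp (t * Complex.I)) =
        ∑ j : Fin n, (x j : ℂ) * Complex.exp ((((j:ℕ) * t : ℝ)) * Complex.I) := by
      rw [hp, Polynomial.eval_finset_sum]
      refine Finset.sum_congr rfl fun j _ => ?_
      rw [Polynomial.eval_mul, Polynomial.eval_C, Polynomial.eval_pow, Polynomial.eval_X,
        ← Complex.exp_nat_mul]
      push_cast
      ring_nf
    rw [Polynomial.IsRoot, heval]
    apply Complex.ext
    · rw [Complex.re_sum]
      simp only [Complex.mul_re, Complex.ofReal_re, Complex.ofReal_im,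
        Complex.exp_ofReal_mul_I_re, Complex.exp_ofReal_mul_I_im, zero_mul, sub_zero,
        Complex.zero_re]
      exact h2.1
    · rw [Complex.im_sum]
      simp only [Complex.mul_im, Complex.ofReal_re, Complex.ofReal_im,
        Complex.exp_ofReal_mul_I_re, Complex.exp_ofReal_mul_I_im, zero_mul, add_zero,
        Complex.zero_im]
      exact h2.2
  have hinj : Set.InjOn (fun t : ℝ => Complex.exp (t * Complex.I)) (Set.Ioo 0 π) := by
    intro t1 h1 t2 h2 he
    have : Real.cos t1 = Real.cos t2 := by
      have := congrArg Complex.re he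
      simpa [Complex.exp_ofReal_mul_I_re] using this
    exact Real.injOn_cos ⟨h1.1.le, h1.2.le⟩ ⟨h2.1.le, h2.2.le⟩ this
  have hinf : {z : ℂ | p.IsRoot z}.Infinite := by
    apply Set.Infinite.mono (s := (fun t : ℝ => Complex.exp (t * Complex.I)) '' Set.Ioo 0 π)
    · rintro z ⟨t, ht, rfl⟩
      exact hroot t ht
    · exact (Set.Ioo_infinite pi_pos).image hinj
  have hp0 : p = 0 := p.eq_zero_of_infinite_isRoot hinf
  apply hx
  funext j
  have hc : p.coeff (j : ℕ) = (x j : ℂ) := by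
    rw [hp, Polynomial.finset_sum_coeff]
    rw [Finset.sum_eq_single j]
    · simp
    · intro i _ hij
      simp only [Polynomial.coeff_C_mul, Polynomial.coeff_X_pow]
      rw [if_neg (fun h => hij (Fin.val_injective h.symm))]
      simp
    · intro hji; exact absurd (Finset.mem_univ j) hji
  rw [hp0] at hc
  simp only [Polynomial.coeff_zero] at hc
  have := hc.symm
  exact_mod_cast congrArg Complex.re this

lemma my_integral_pos {h : ℝ → ℝ} (hc : ContinuousOn h (Set.Icc 0 π))
    (h0 : ∀ t ∈ Set.Icc (0:ℝ) π, 0 ≤ h t) {t0 : ℝ} (ht0 : t0 ∈ Set.Ioo (0:ℝ) π)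
    (hpos : 0 < h t0) : 0 < ∫ t in (0:ℝ)..π, h t := by
  have huIcc : Set.uIcc (0:ℝ) π = Set.Icc 0 π := Set.uIcc_of_le pi_pos.le
  have hI : IntervalIntegrable h volume 0 π := by
    apply ContinuousOn.intervalIntegrable; rwa [huIcc]
  have hca : ContinuousAt h t0 := hc.continuousAt (Icc_mem_nhds ht0.1 ht0.2)
  have hev : ∀ᶠ t in nhds t0, 0 < h t := hca.eventually (eventually_gt_nhds hpos)
  obtain ⟨ε, hε, hball⟩ := Metric.eventually_nhds_iff.mp hev
  set a := max (t0 - ε/2) 0 with ha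
  set b := min (t0 + ε/2) π with hb
  have hab : a < t0 ∧ t0 < b := ⟨by simp [ha]; constructor <;> [linarith; exact ht0.1],
    by simp [hb]; constructor <;> [linarith; exact ht0.2]⟩
  have ha0 : 0 ≤ a := le_max_right _ _
  have hbπ : b ≤ π := min_le_right _ _
  have haπ : a ≤ π := le_trans (le_of_lt (lt_of_lt_of_le hab.1 ht0.2.le)) le_rfl
  have h0b : (0:ℝ) ≤ b := le_trans ha0 (le_of_lt (hab.1.trans hab.2))
  have hposIoo : ∀ t ∈ Set.Ioo a b, 0 < h t := by
    intro t ht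
    apply hball
    have h1 : t0 - ε/2 ≤ a := le_max_left _ _
    have h2 : b ≤ t0 + ε/2 := min_le_left _ _
    rw [Real.dist_eq, abs_lt]
    constructor <;> [linarith [ht.1]; linarith [ht.2]]
  have hsub : ∀ (c d : ℝ), 0 ≤ c → d ≤ π → c ≤ d → IntervalIntegrable h volume c d := by
    intro c d hc' hd' hcd
    apply hI.mono_set
    rw [Set.uIcc_of_le hcd, huIcc]
    exact Set.Icc_subset_Icc hc' hd'
  have e1 : (∫ t in (0:ℝ)..a, h t) + (∫ t in a..b, h t) = ∫ t in (0:ℝ)..b, h t :=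
    intervalIntegral.integral_add_adjacent_intervals (hsub 0 a le_rfl haπ ha0)
      (hsub a b ha0 hbπ (hab.1.trans hab.2).le)
  have e2 : (∫ t in (0:ℝ)..b, h t) + (∫ t in b..π, h t) = ∫ t in (0:ℝ)..π, h t :=
    intervalIntegral.integral_add_adjacent_intervals (hsub 0 b le_rfl hbπ h0b)
      (hsub b π h0b le_rfl hbπ)
  have i1 : 0 ≤ ∫ t in (0:ℝ)..a, h t :=
    intervalIntegral.integral_nonneg ha0 (fun u hu => h0 u ⟨hu.1, hu.2.trans haπ⟩)
  have i3 : 0 ≤ ∫ t in b..π, h t :=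
    intervalIntegral.integral_nonneg hbπ (fun u hu => h0 u ⟨h0b.trans hu.1, hu.2⟩)
  have i2 : 0 < ∫ t in a..b, h t :=
    intervalIntegral.intervalIntegral_pos_of_pos_on (hsub a b ha0 hbπ (hab.1.trans hab.2).le)
      hposIoo (hab.1.trans hab.2)
  linarith [e1, e2]

lemma two_sub_cos_eq (t : ℝ) : 2 - 2 * Real.cos t = 4 * Real.sin (t/2)^2 := by
  have h1 := Real.cos_two_mul (t/2)
  have h2 := Real.sin_sq_add_cos_sq (t/2)
  rw [show 2*(t/2) = t by ring] at h1
  nlinarith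

lemma two_sub_cos_nonneg (t : ℝ) : 0 ≤ 2 - 2 * Real.cos t := by
  rw [two_sub_cos_eq]; positivity

lemma two_sub_cos_pos {t : ℝ} (h1 : 0 < t) (h2 : t ≤ π) : 0 < 2 - 2 * Real.cos t := by
  rw [two_sub_cos_eq]
  have : 0 < Real.sin (t/2) := Real.sin_pos_of_pos_of_lt_pi (by linarith)
    (by linarith [pi_pos])
  positivity

lemma two_sub_cos_lt_sq {t : ℝ} (ht : t ≠ 0) : 2 - 2 * Real.cos t < t^2 := by
  rw [two_sub_cos_eq]
  nlinarith [Real.sin_sq_lt_sq (show t/2 ≠ 0 by intro h; apply ht; linarith)]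

lemma jordan_strict {t : ℝ} (h1 : 0 < t) (h2 : t < π) :
    4 * t^2 < π^2 * (2 - 2 * Real.cos t) := by
  rw [two_sub_cos_eq]
  have hj : 2/π * (t/2) < Real.sin (t/2) := Real.mul_lt_sin (by linarith) (by linarith)
  have hππ : (0:ℝ) < π := pi_pos
  have h3 : t/π < Real.sin (t/2) := by
    have : 2/π * (t/2) = t/π := by field_simp
    rwa [this] at hj
  have h4 : 0 < t/π := by positivity
  have h5 : (t/π)^2 < Real.sin (t/2)^2 := by nlinarith
  have h6 : π^2 * (t/π)^2 = t^2 := by field_simp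
  nlinarith [mul_lt_mul_of_pos_left h5 (show (0:ℝ) < π^2 by positivity)]

lemma cont_abs_rpow {r : ℝ} (hr : 0 ≤ r) : Continuous fun t : ℝ => |t| ^ r := by
  rw [continuous_iff_continuousAt]
  intro x
  exact (Real.continuousAt_rpow_const |x| r (Or.inr hr)).comp continuous_abs.continuousAt

lemma tn_hermitian (n : ℕ) (f : ℝ → ℝ) : (Tn n f).IsHermitian := by
  rw [Matrix.IsHermitian]
  ext j k
  simp only [Matrix.conjTranspose_apply, Tn, Matrix.of_apply, star_trivial]
  unfold fourierCoeffR
  congr 1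
  refine intervalIntegral.integral_congr fun t _ => ?_
  congr 1
  push_cast
  rw [show ((k:ℝ) - (j:ℝ)) * t = -(((j:ℝ) - (k:ℝ)) * t) by ring, Real.cos_neg]

lemma tn_posdef (n : ℕ) (f : ℝ → ℝ) (hf : ContinuousOn f (Set.Icc 0 π))
    (h0 : ∀ t ∈ Set.Icc (0:ℝ) π, 0 ≤ f t) (hpos : ∀ t ∈ Set.Ioo (0:ℝ) π, 0 < f t) :
    (Tn n f).PosDef := by
  refine Matrix.PosDef.of_dotProduct_mulVec_pos (tn_hermitian n f) fun x hx => ?_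
  simp only [star_trivial]
  rw [tn_quadform n f hf x]
  obtain ⟨t0, ht0, hpt0⟩ := exists_ptrig_pos hx
  have hπ : (0:ℝ) < 1/π := by positivity
  refine mul_pos hπ (my_integral_pos (hf.mul (ptrig_continuous n x).continuousOn)
    (fun t ht => mul_nonneg (h0 t ht) (ptrig_nonneg n x t)) ht0
    (mul_pos (hpos t0 ht0) hpt0))

/-- **Band-Toeplitz spectral equivalence for `θ = 2k + r`.**
Let `k ≥ 1`, `r ∈ [0,2)`, `θ = 2k + r`, and `g t = (2 - 2cos t)^k |t|^r`.  Let
`rs` and `Rs` be respectively the minimum and the maximum over `t ∈ [-π,π]` of the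
ratio `|t|^{2k}/(2 - 2cos t)^k`, extended continuously at `t = 0` by the value `1`.
Then `T_n(g)` and `T_n(|t|^θ)` are positive definite and every eigenvalue of
`T_n(g)⁻¹ T_n(|t|^θ)` lies in the open interval `(rs, Rs)`. -/
theorem band_toeplitz_spectral_equivalence
    (k : ℕ) (hk : 1 ≤ k) (r : ℝ) (hr : r ∈ Set.Ico (0 : ℝ) 2)
    (θ : ℝ) (hθ : θ = 2 * k + r)
    (rs Rs : ℝ)
    (hrs : IsLeast ((fun t : ℝ =>
      if t = 0 then (1 : ℝ) else |t| ^ (2 * k) / (2 - 2 * Real.cos t) ^ k) ''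
        Set.Icc (-π) π) rs)
    (hRs : IsGreatest ((fun t : ℝ =>
      if t = 0 then (1 : ℝ) else |t| ^ (2 * k) / (2 - 2 * Real.cos t) ^ k) ''
        Set.Icc (-π) π) Rs) :
    ∀ n : ℕ, 1 ≤ n →
      (Tn n (fun t => (2 - 2 * Real.cos t) ^ k * |t| ^ r)).PosDef ∧
      (Tn n (fun t => |t| ^ θ)).PosDef ∧
      ∀ lam ∈ spectrum ℝ
          ((Tn n (fun t => (2 - 2 * Real.cos t) ^ k * |t| ^ r))⁻¹ *
            Tn n (fun t => |t| ^ θ)),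
        rs < lam ∧ lam < Rs := by
  obtain ⟨hr0, hr2⟩ := hr
  have hπ : (0:ℝ) < π := pi_pos
  have hk0 : k ≠ 0 := by omega
  have hkR : (1:ℝ) ≤ (k:ℝ) := by exact_mod_cast hk
  have hθpos : 0 < θ := by rw [hθ]; linarith
  have hπinv : (0:ℝ) < 1/π := by positivity
  -- lower/upper bound facts from hrs, hRs
  have hrs_le : ∀ t : ℝ, t ∈ Set.Icc (-π) π →
      rs ≤ (if t = 0 then (1:ℝ) else |t| ^ (2*k) / (2 - 2*Real.cos t)^k) :=
    fun t ht => hrs.2 ⟨t, ht, rfl⟩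
  have hRs_ge : ∀ t : ℝ, t ∈ Set.Icc (-π) π →
      (if t = 0 then (1:ℝ) else |t| ^ (2*k) / (2 - 2*Real.cos t)^k) ≤ Rs :=
    fun t ht => hRs.2 ⟨t, ht, rfl⟩
  have hrs1 : rs ≤ 1 := by
    have := hrs_le 0 ⟨by linarith, by linarith⟩
    rwa [if_pos rfl] at this
  have hRsπ : π^(2*k) ≤ Rs * 4^k := by
    have h2 := hRs_ge π ⟨by linarith, le_rfl⟩
    rw [if_neg (ne_of_gt hπ), Real.cos_pi, abs_of_pos hπ] at h2
    rw [show (2 - 2*(-1:ℝ)) = 4 by norm_num] at h2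
    have h4 : (0:ℝ) < 4^k := by positivity
    calc π^(2*k) = π^(2*k)/4^k * 4^k := by field_simp
    _ ≤ Rs * 4^k := mul_le_mul_of_nonneg_right h2 h4.le
  -- pointwise ratio bounds on (0, π]
  have hmemlow : ∀ t : ℝ, t ∈ Set.Ioc (0:ℝ) π → rs * (2 - 2*Real.cos t)^k ≤ t^(2*k) := by
    intro t ht
    have hc : 0 < (2 - 2*Real.cos t)^k := pow_pos (two_sub_cos_pos ht.1 ht.2) k
    have h1 := hrs_le t ⟨by linarith [ht.1], ht.2⟩
    rw [if_neg (ne_of_gt ht.1), abs_of_pos ht.1] at h1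
    exact (le_div_iff₀ hc).mp h1
  have hmemup : ∀ t : ℝ, t ∈ Set.Ioc (0:ℝ) π → t^(2*k) ≤ Rs * (2 - 2*Real.cos t)^k := by
    intro t ht
    have hc : 0 < (2 - 2*Real.cos t)^k := pow_pos (two_sub_cos_pos ht.1 ht.2) k
    have h1 := hRs_ge t ⟨by linarith [ht.1], ht.2⟩
    rw [if_neg (ne_of_gt ht.1), abs_of_pos ht.1] at h1
    exact (div_le_iff₀ hc).mp h1
  -- decomposition |t|^θ = t^(2k) * |t|^r for t ∈ (0, π]
  have habs : ∀ t : ℝ, t ∈ Set.Ioc (0:ℝ) π → |t| ^ θ = t^(2*k) * |t| ^ r := by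
    intro t ht
    rw [abs_of_pos ht.1, hθ, Real.rpow_add ht.1]
    congr 1
    rw [show (2*(k:ℝ)) = ((2*k : ℕ) : ℝ) by push_cast; ring, Real.rpow_natCast]
  -- continuity and positivity of the two symbols
  have hgc : ContinuousOn (fun t : ℝ => (2 - 2 * Real.cos t) ^ k * |t| ^ r) (Set.Icc 0 π) :=
    (((by fun_prop : Continuous fun t : ℝ => (2 - 2*Real.cos t)^k)).mul
      (cont_abs_rpow hr0)).continuousOn
  have hθc : ContinuousOn (fun t : ℝ => |t| ^ θ) (Set.Icc 0 π) :=
    (cont_abs_rpow hθpos.le).continuousOn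
  have hg0 : ∀ t ∈ Set.Icc (0:ℝ) π, 0 ≤ (2 - 2*Real.cos t)^k * |t|^r :=
    fun t _ => mul_nonneg (pow_nonneg (two_sub_cos_nonneg t) k)
      (Real.rpow_nonneg (abs_nonneg t) r)
  have hgpos : ∀ t ∈ Set.Ioo (0:ℝ) π, 0 < (2 - 2*Real.cos t)^k * |t|^r :=
    fun t ht => mul_pos (pow_pos (two_sub_cos_pos ht.1 ht.2.le) k)
      (Real.rpow_pos_of_pos (abs_pos.mpr (ne_of_gt ht.1)) r)
  -- pointwise comparison of the symbols
  have hzerog : (2 - 2*Real.cos 0)^k * |(0:ℝ)|^r = 0 := by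
    rw [Real.cos_zero]
    rw [show (2 - 2*(1:ℝ)) = 0 by norm_num, zero_pow hk0, zero_mul]
  have hzeroθ : |(0:ℝ)| ^ θ = 0 := by
    rw [abs_zero, Real.zero_rpow hθpos.ne']
  have hlow : ∀ t ∈ Set.Icc (0:ℝ) π, rs * ((2 - 2*Real.cos t)^k * |t|^r) ≤ |t| ^ θ := by
    intro t ht
    rcases eq_or_lt_of_le ht.1 with h|h
    · rw [← h, hzerog, hzeroθ, mul_zero]
    · have h2 := hmemlow t ⟨h, ht.2⟩
      have hrp : 0 ≤ |t|^r := Real.rpow_nonneg (abs_nonneg t) r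
      calc rs * ((2 - 2*Real.cos t)^k * |t|^r) = (rs * (2 - 2*Real.cos t)^k) * |t|^r := by ring
      _ ≤ t^(2*k) * |t|^r := mul_le_mul_of_nonneg_right h2 hrp
      _ = |t| ^ θ := (habs t ⟨h, ht.2⟩).symm
  have hup : ∀ t ∈ Set.Icc (0:ℝ) π, |t| ^ θ ≤ Rs * ((2 - 2*Real.cos t)^k * |t|^r) := by
    intro t ht
    rcases eq_or_lt_of_le ht.1 with h|h
    · rw [← h, hzerog, hzeroθ, mul_zero]
    · have h2 := hmemup t ⟨h, ht.2⟩
      have hrp : 0 ≤ |t|^r := Real.rpow_nonneg (abs_nonneg t) r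
      calc |t| ^ θ = t^(2*k) * |t|^r := habs t ⟨h, ht.2⟩
      _ ≤ (Rs * (2 - 2*Real.cos t)^k) * |t|^r := mul_le_mul_of_nonneg_right h2 hrp
      _ = Rs * ((2 - 2*Real.cos t)^k * |t|^r) := by ring
  have hlows : ∀ t ∈ Set.Ioo (0:ℝ) π, rs * ((2 - 2*Real.cos t)^k * |t|^r) < |t| ^ θ := by
    intro t ht
    have hrp : 0 < |t|^r := Real.rpow_pos_of_pos (abs_pos.mpr (ne_of_gt ht.1)) r
    have hlt : (2 - 2*Real.cos t)^k < t^(2*k) := by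
      rw [pow_mul]
      exact pow_lt_pow_left₀ (two_sub_cos_lt_sq (ne_of_gt ht.1)) (two_sub_cos_nonneg t) hk0
    calc rs * ((2 - 2*Real.cos t)^k * |t|^r) ≤ 1 * ((2 - 2*Real.cos t)^k * |t|^r) :=
          mul_le_mul_of_nonneg_right hrs1 (hg0 t ⟨ht.1.le, ht.2.le⟩)
    _ = (2 - 2*Real.cos t)^k * |t|^r := one_mul _
    _ < t^(2*k) * |t|^r := mul_lt_mul_of_pos_right hlt hrp
    _ = |t| ^ θ := (habs t ⟨ht.1, ht.2.le⟩).symm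
  have hups : ∀ t ∈ Set.Ioo (0:ℝ) π, |t| ^ θ < Rs * ((2 - 2*Real.cos t)^k * |t|^r) := by
    intro t ht
    have hrp : 0 < |t|^r := Real.rpow_pos_of_pos (abs_pos.mpr (ne_of_gt ht.1)) r
    have hj := jordan_strict ht.1 ht.2
    have h4c : (0:ℝ) ≤ 4 * t^2 := by positivity
    have hpk : (4*t^2)^k < (π^2 * (2 - 2*Real.cos t))^k := pow_lt_pow_left₀ hj h4c hk0
    rw [mul_pow, mul_pow, ← pow_mul, ← pow_mul] at hpk
    -- hpk : 4^k * t^(2*k) < π^(2*k) * (2 - 2cos t)^k  (up to exponent arrangement)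
    have hc0 : 0 ≤ (2 - 2*Real.cos t)^k := pow_nonneg (two_sub_cos_nonneg t) k
    have h4k : (0:ℝ) < 4^k := by positivity
    have hstep : π^(2*k) * (2 - 2*Real.cos t)^k ≤ (Rs * 4^k) * (2 - 2*Real.cos t)^k :=
      mul_le_mul_of_nonneg_right hRsπ hc0
    have hkey : t^(2*k) < Rs * (2 - 2*Real.cos t)^k := by
      have h1 : 4^k * t^(2*k) < 4^k * (Rs * (2 - 2*Real.cos t)^k) := by nlinarith
      exact lt_of_mul_lt_mul_left h1 h4k.le
    calc |t| ^ θ = t^(2*k) * |t|^r := habs t ⟨ht.1, ht.2.le⟩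
    _ < (Rs * (2 - 2*Real.cos t)^k) * |t|^r := mul_lt_mul_of_pos_right hkey hrp
    _ = Rs * ((2 - 2*Real.cos t)^k * |t|^r) := by ring
  -- now fix n
  intro n hn
  have hApd : (Tn n (fun t => (2 - 2 * Real.cos t) ^ k * |t| ^ r)).PosDef :=
    tn_posdef n _ hgc hg0 hgpos
  have hBpd : (Tn n (fun t => |t| ^ θ)).PosDef :=
    tn_posdef n _ hθc (fun t _ => Real.rpow_nonneg (abs_nonneg t) θ)
      (fun t ht => Real.rpow_pos_of_pos (abs_pos.mpr (ne_of_gt ht.1)) θ)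
  refine ⟨hApd, hBpd, ?_⟩
  set A := Tn n (fun t => (2 - 2 * Real.cos t) ^ k * |t| ^ r) with hA_def
  set B := Tn n (fun t => |t| ^ θ) with hB_def
  have hQA : ∀ v : Fin n → ℝ, v ⬝ᵥ A *ᵥ v =
      (1/π) * ∫ t in (0:ℝ)..π, ((2 - 2*Real.cos t)^k * |t|^r) * ptrig n v t :=
    fun v => tn_quadform n _ hgc v
  have hQB : ∀ v : Fin n → ℝ, v ⬝ᵥ B *ᵥ v =
      (1/π) * ∫ t in (0:ℝ)..π, (|t| ^ θ) * ptrig n v t :=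
    fun v => tn_quadform n _ hθc v
  have quadlt : ∀ v : Fin n → ℝ, v ≠ 0 →
      rs * (v ⬝ᵥ A *ᵥ v) < v ⬝ᵥ B *ᵥ v ∧ v ⬝ᵥ B *ᵥ v < Rs * (v ⬝ᵥ A *ᵥ v) := by
    intro v hv
    obtain ⟨t0, ht0, hpt0⟩ := exists_ptrig_pos hv
    have hPc : Continuous (ptrig n v) := ptrig_continuous n v
    have huIcc : Set.uIcc (0:ℝ) π = Set.Icc 0 π := Set.uIcc_of_le hπ.le
    have hIg : IntervalIntegrable (fun t => ((2 - 2*Real.cos t)^k * |t|^r) * ptrig n v t)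
        volume 0 π := by
      apply ContinuousOn.intervalIntegrable
      rw [huIcc]; exact hgc.mul hPc.continuousOn
    have hIθ : IntervalIntegrable (fun t => (|t| ^ θ) * ptrig n v t) volume 0 π := by
      apply ContinuousOn.intervalIntegrable
      rw [huIcc]; exact hθc.mul hPc.continuousOn
    have hdiff1 : v ⬝ᵥ B *ᵥ v - rs * (v ⬝ᵥ A *ᵥ v) =
        (1/π) * ∫ t in (0:ℝ)..π, (|t| ^ θ - rs * ((2 - 2*Real.cos t)^k * |t|^r)) * ptrig n v t := by
      rw [hQA v, hQB v]
      rw [show (fun t => (|t| ^ θ - rs * ((2 - 2*Real.cos t)^k * |t|^r)) * ptrig n v t)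
          = fun t => (|t| ^ θ) * ptrig n v t -
            rs * (((2 - 2*Real.cos t)^k * |t|^r) * ptrig n v t) from funext fun t => by ring]
      rw [intervalIntegral.integral_sub hIθ (hIg.const_mul rs),
        intervalIntegral.integral_const_mul]
      ring
    have hdiff2 : Rs * (v ⬝ᵥ A *ᵥ v) - v ⬝ᵥ B *ᵥ v =
        (1/π) * ∫ t in (0:ℝ)..π, (Rs * ((2 - 2*Real.cos t)^k * |t|^r) - |t| ^ θ) * ptrig n v t := by
      rw [hQA v, hQB v]
      rw [show (fun t => (Rs * ((2 - 2*Real.cos t)^k * |t|^r) - |t| ^ θ) * ptrig n v t)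
          = fun t => Rs * (((2 - 2*Real.cos t)^k * |t|^r) * ptrig n v t) -
            (|t| ^ θ) * ptrig n v t from funext fun t => by ring]
      rw [intervalIntegral.integral_sub (hIg.const_mul Rs) hIθ,
        intervalIntegral.integral_const_mul]
      ring
    constructor
    · have hpos1 : 0 < ∫ t in (0:ℝ)..π,
          (|t| ^ θ - rs * ((2 - 2*Real.cos t)^k * |t|^r)) * ptrig n v t := by
        apply my_integral_pos
        · exact ((cont_abs_rpow hθpos.le).continuousOn.sub
            (continuousOn_const.mul hgc)).mul hPc.continuousOn
        · exact fun t ht => mul_nonneg (sub_nonneg.mpr (hlow t ht)) (ptrig_nonneg n v t)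
        · exact ht0
        · exact mul_pos (sub_pos.mpr (hlows t0 ht0)) hpt0
      nlinarith [mul_pos hπinv hpos1, hdiff1]
    · have hpos2 : 0 < ∫ t in (0:ℝ)..π,
          (Rs * ((2 - 2*Real.cos t)^k * |t|^r) - |t| ^ θ) * ptrig n v t := by
        apply my_integral_pos
        · exact ((continuousOn_const.mul hgc).sub
            (cont_abs_rpow hθpos.le).continuousOn).mul hPc.continuousOn
        · exact fun t ht => mul_nonneg (sub_nonneg.mpr (hup t ht)) (ptrig_nonneg n v t)
        · exact ht0
        · exact mul_pos (sub_pos.mpr (hups t0 ht0)) hpt0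
      nlinarith [mul_pos hπinv hpos2, hdiff2]
  -- eigenvalue extraction
  intro lam hlam
  have hdetA : IsUnit A.det := isUnit_iff_ne_zero.mpr hApd.det_pos.ne'
  rw [spectrum.mem_iff] at hlam
  have hdet0 : (algebraMap ℝ (Matrix (Fin n) (Fin n) ℝ) lam - A⁻¹ * B).det = 0 := by
    by_contra hne
    exact hlam ((Matrix.isUnit_iff_isUnit_det _).mpr (isUnit_iff_ne_zero.mpr hne))
  obtain ⟨v, hv0, hv⟩ := Matrix.exists_mulVec_eq_zero_iff.mpr hdet0
  have h1 : (A⁻¹ * B) *ᵥ v = lam • v := by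
    rw [Matrix.sub_mulVec] at hv
    have halg : (algebraMap ℝ (Matrix (Fin n) (Fin n) ℝ) lam) *ᵥ v = lam • v := by
      rw [Algebra.algebraMap_eq_smul_one, Matrix.smul_mulVec, Matrix.one_mulVec]
    rw [halg] at hv
    exact (sub_eq_zero.mp hv).symm
  have h2 : B *ᵥ v = lam • (A *ᵥ v) := by
    have h := congrArg (fun w => A *ᵥ w) h1
    simp only [Matrix.mulVec_mulVec] at h
    rw [← Matrix.mul_assoc, Matrix.mul_nonsing_inv A hdetA, Matrix.one_mul] at h
    rw [h, Matrix.mulVec_smul]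
  have hq : v ⬝ᵥ B *ᵥ v = lam * (v ⬝ᵥ A *ᵥ v) := by
    rw [h2, dotProduct_smul, smul_eq_mul]
  have hQApos : 0 < v ⬝ᵥ A *ᵥ v := by
    have := hApd.dotProduct_mulVec_pos hv0
    simpa using this
  obtain ⟨hltl, hltu⟩ := quadlt v hv0
  rw [hq] at hltl hltu
  exact ⟨(mul_lt_mul_iff_left₀ hQApos).mp hltl, (mul_lt_mul_iff_left₀ hQApos).mp hltu⟩
end
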